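/- arXiv:2302.13455 — 4 statements merged into one kernel-verified Lean document; each statement's English description precedes it below -/
import Mathlib

section
/- Let h ≥ 1 and T ≥ 2h be integers, set T_h := T − h, and let ρ be a real number with ρ ≠ 1 and ρ ≠ −1 (with the convention 0^0 = 1). Then Σ_{s=0}^{h−1} Σ_{t=h−s}^{T_h} (1 − t/T_h) ρ^{t−h+2s} = [ (T−2h)(1−ρ²) − (T−h) ρ^h (1−ρ²) + ρ^{T−2h+1} (1−ρ^{2h}) ] / [ (T−h)(1−ρ)²(1−ρ²) ], and this common value also equals (1−ρ^h)/(1−ρ)² − h/((T−h)(1−ρ)²) + ρ^{T−2h+1}(1−ρ^{2h})/((T−h)(1−ρ)²(1−ρ²)). -/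
lemma lemGeo (ρ : ℝ) (n : ℕ) : (1 - ρ) * ∑ u ∈ Finset.range n, ρ ^ u = 1 - ρ ^ n := by
  linear_combination (-1 : ℝ) * geom_sum_mul ρ n

lemma lemA (ρ : ℝ) (k : ℕ) :
    (1 - ρ) ^ 2 * ∑ u ∈ Finset.range (k + 1), ((k : ℝ) - u) * ρ ^ u
      = k * (1 - ρ) - ρ + ρ ^ (k + 1) := by
  induction k with
  | zero => simp
  | succ k ih =>
    have e3 : ∑ u ∈ Finset.range (k + 2), ((↑(k + 1) : ℝ) - u) * ρ ^ u
        = ∑ u ∈ Finset.range (k + 2), ((k : ℝ) - u) * ρ ^ u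
          + ∑ u ∈ Finset.range (k + 2), ρ ^ u := by
      rw [← Finset.sum_add_distrib]
      refine Finset.sum_congr rfl fun u _ => ?_
      push_cast; ring
    have e1 := Finset.sum_range_succ (fun u => ((k : ℝ) - u) * ρ ^ u) (k + 1)
    have e2 := lemGeo ρ (k + 2)
    push_cast at e1 e3 ⊢
    linear_combination (1 - ρ) ^ 2 * e3 + (1 - ρ) ^ 2 * e1 + ih + (1 - ρ) * e2

lemma keyP (ρ : ℝ) (h : ℕ) : ∀ k : ℕ,
    (1 - ρ) ^ 2 * (1 - ρ ^ 2) *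
        ∑ s ∈ Finset.range h, ρ ^ s *
          ∑ u ∈ Finset.range (k + s + 1), ((k : ℝ) + s - u) * ρ ^ u
      = (k : ℝ) * (1 - ρ ^ 2) - ((h : ℝ) + k) * ρ ^ h * (1 - ρ ^ 2)
        + ρ ^ (k + 1) * (1 - ρ ^ (2 * h)) := by
  induction h with
  | zero => intro k; simp
  | succ h ih =>
    intro k
    rw [Finset.sum_range_succ']
    have e0 : ∀ i ∈ Finset.range h,
        ρ ^ (i + 1) * ∑ u ∈ Finset.range (k + (i + 1) + 1), ((k : ℝ) + ↑(i + 1) - u) * ρ ^ u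
          = ρ * (ρ ^ i * ∑ u ∈ Finset.range ((k + 1) + i + 1), ((↑(k + 1) : ℝ) + i - u) * ρ ^ u) := by
      intro i _
      have hr : k + (i + 1) + 1 = (k + 1) + i + 1 := by omega
      rw [hr]
      have hc : ∀ u : ℕ, ((k : ℝ) + ↑(i + 1) - u) = ((↑(k + 1) : ℝ) + i - u) := by
        intro u; push_cast; ring
      simp only [hc]
      ring
    rw [Finset.sum_congr rfl e0, ← Finset.mul_sum]
    have ihk := ih (k + 1)
    have hA := lemA ρ k
    have e4 : ρ ^ (0 : ℕ) * ∑ u ∈ Finset.range (k + 0 + 1), ((k : ℝ) + ((0 : ℕ) : ℝ) - u) * ρ ^ u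
        = ∑ u ∈ Finset.range (k + 1), ((k : ℝ) - u) * ρ ^ u := by
      simp
    push_cast at ihk hA e4 ⊢
    linear_combination ρ * ihk + (1 - ρ ^ 2) * hA + (1 - ρ) ^ 2 * (1 - ρ ^ 2) * e4

/-- Closed-form evaluation of the bias function
`f_{T,h}(ρ) = Σ_{s=0}^{h−1} Σ_{t=h−s}^{T−h} (1 − t/(T−h)) ρ^{t−h+2s}`. -/
theorem bias_function_closed_form
    (h T : ℕ) (hh : 1 ≤ h) (hT : 2 * h ≤ T) (ρ : ℝ) (hρ1 : ρ ≠ 1) (hρ2 : ρ ≠ -1) :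
    (∑ s ∈ Finset.range h, ∑ t ∈ Finset.Icc (h - s) (T - h),
        (1 - (t : ℝ) / ((T - h : ℕ) : ℝ)) * ρ ^ (t + 2 * s - h))
      = (((T : ℝ) - 2 * h) * (1 - ρ ^ 2) - ((T : ℝ) - h) * ρ ^ h * (1 - ρ ^ 2)
          + ρ ^ (T - 2 * h + 1) * (1 - ρ ^ (2 * h)))
        / (((T : ℝ) - h) * (1 - ρ) ^ 2 * (1 - ρ ^ 2))
    ∧ (∑ s ∈ Finset.range h, ∑ t ∈ Finset.Icc (h - s) (T - h),
        (1 - (t : ℝ) / ((T - h : ℕ) : ℝ)) * ρ ^ (t + 2 * s - h))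
      = (1 - ρ ^ h) / (1 - ρ) ^ 2
        - (h : ℝ) / (((T : ℝ) - h) * (1 - ρ) ^ 2)
        + ρ ^ (T - 2 * h + 1) * (1 - ρ ^ (2 * h))
          / (((T : ℝ) - h) * (1 - ρ) ^ 2 * (1 - ρ ^ 2)) := by
  set N := T - h with hN
  set k := T - 2 * h with hk
  have hNk : N = h + k := by omega
  have hNR : ((N : ℕ) : ℝ) = (h : ℝ) + k := by rw [hNk]; push_cast; ring
  have hTR : (T : ℝ) = 2 * h + k := by
    have hT2 : T = 2 * h + k := by omega
    rw [hT2]; push_cast; ring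
  have hTh : (T : ℝ) - h = ((N : ℕ) : ℝ) := by rw [hNR, hTR]; ring
  have hNne : ((N : ℕ) : ℝ) ≠ 0 := by
    rw [hNR]
    have h1R : (1 : ℝ) ≤ (h : ℝ) := by exact_mod_cast hh
    have hkR : (0 : ℝ) ≤ (k : ℝ) := Nat.cast_nonneg k
    linarith
  have h1 : (1 : ℝ) - ρ ≠ 0 := fun hc => hρ1 (by linarith [sub_eq_zero.mp hc])
  have h2 : (1 : ℝ) + ρ ≠ 0 := fun hc => hρ2 (by linarith [add_eq_zero_iff_eq_neg.mp hc])
  have h3 : (1 : ℝ) - ρ ^ 2 ≠ 0 := by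
    have hfac : (1 : ℝ) - ρ ^ 2 = (1 - ρ) * (1 + ρ) := by ring
    rw [hfac]; exact mul_ne_zero h1 h2
  have hsum : (∑ s ∈ Finset.range h, ∑ t ∈ Finset.Icc (h - s) (T - h),
        (1 - (t : ℝ) / ((T - h : ℕ) : ℝ)) * ρ ^ (t + 2 * s - h))
      = (1 / ((N : ℕ) : ℝ)) *
        ∑ s ∈ Finset.range h, ρ ^ s *
          ∑ u ∈ Finset.range (k + s + 1), ((k : ℝ) + s - u) * ρ ^ u := by
    rw [Finset.mul_sum]
    refine Finset.sum_congr rfl fun s hs => ?_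
    have hsh : s < h := Finset.mem_range.mp hs
    have hIcc : Finset.Icc (h - s) (T - h) = Finset.Ico (h - s) (N + 1) := by
      rw [Finset.Ico_add_one_right_eq_Icc]
    rw [hIcc, Finset.sum_Ico_eq_sum_range]
    have hr : N + 1 - (h - s) = k + s + 1 := by omega
    rw [hr, Finset.mul_sum, Finset.mul_sum]
    refine Finset.sum_congr rfl fun u hu => ?_
    have hexp : (h - s + u) + 2 * s - h = u + s := by omega
    rw [hexp]
    have hcast : ((h - s + u : ℕ) : ℝ) = (h : ℝ) - s + u := by
      push_cast [Nat.cast_sub hsh.le]; ring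
    rw [hcast, pow_add, hNR]
    have hne : (h : ℝ) + k ≠ 0 := by rw [← hNR]; exact hNne
    field_simp
    ring
  have hP := keyP ρ h k
  have first : (∑ s ∈ Finset.range h, ∑ t ∈ Finset.Icc (h - s) (T - h),
        (1 - (t : ℝ) / ((T - h : ℕ) : ℝ)) * ρ ^ (t + 2 * s - h))
      = (((T : ℝ) - 2 * h) * (1 - ρ ^ 2) - ((T : ℝ) - h) * ρ ^ h * (1 - ρ ^ 2)
          + ρ ^ (T - 2 * h + 1) * (1 - ρ ^ (2 * h)))
        / (((T : ℝ) - h) * (1 - ρ) ^ 2 * (1 - ρ ^ 2)) := by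
    have hS : (∑ s ∈ Finset.range h, ρ ^ s *
          ∑ u ∈ Finset.range (k + s + 1), ((k : ℝ) + s - u) * ρ ^ u)
        = ((k : ℝ) * (1 - ρ ^ 2) - ((h : ℝ) + k) * ρ ^ h * (1 - ρ ^ 2)
            + ρ ^ (k + 1) * (1 - ρ ^ (2 * h))) / ((1 - ρ) ^ 2 * (1 - ρ ^ 2)) := by
      rw [eq_div_iff (mul_ne_zero (pow_ne_zero 2 h1) h3)]
      linear_combination hP
    rw [hsum, hS, hTh, hTR, ← hk, hNR]
    have hne : (h : ℝ) + k ≠ 0 := by rw [← hNR]; exact hNne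
    field_simp
    ring_nf
  refine ⟨first, ?_⟩
  rw [first, hTh, hTR, hNR]
  have hne : (h : ℝ) + k ≠ 0 := by rw [← hNR]; exact hNne
  field_simp
  ring
end

section
/- Fix an integer h ≥ 1, a real ρ with |ρ| < 1, and a real constant c > 0. Let (N_n) and (T_n) be sequences of positive integers with T_n → ∞ and N_n / T_n → c. Then √(N_n / (T_n − h)) · f_{T_n,h}(ρ) → √c · (1 − ρ^h)/(1 − ρ)² as n → ∞, where f_{T,h}(ρ) := Σ_{s=0}^{h−1} Σ_{t=h−s}^{T−h} (1 − t/(T−h)) ρ^{t−h+2s} (with the convention 0^0 = 1). -/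
open Filter Topology

/-- Under the joint asymptotic regime `N_n/T_n → c`, the scaled bias
`√(N_n/(T_n−h)) f_{T_n,h}(ρ)` converges to `√c (1−ρ^h)/(1−ρ)²`, where
`f_{T,h}(ρ) = Σ_{s=0}^{h−1} Σ_{t=h−s}^{T−h} (1 − t/(T−h)) ρ^{t−h+2s}`. -/
theorem scaled_bias_limit
    (h : ℕ) (hh : 1 ≤ h) (ρ : ℝ) (hρ : |ρ| < 1) (c : ℝ) (hc : 0 < c)
    (N T : ℕ → ℕ) (hNpos : ∀ n, 0 < N n) (hTpos : ∀ n, 0 < T n)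
    (hT : Tendsto (fun n => T n) atTop atTop)
    (hNT : Tendsto (fun n => (N n : ℝ) / (T n : ℝ)) atTop (𝓝 c)) :
    Tendsto (fun n =>
        Real.sqrt ((N n : ℝ) / ((T n - h : ℕ) : ℝ)) *
          ∑ s ∈ Finset.range h, ∑ t ∈ Finset.Icc (h - s) (T n - h),
            (1 - (t : ℝ) / ((T n - h : ℕ) : ℝ)) * ρ ^ (t + 2 * s - h))
      atTop (𝓝 (Real.sqrt c * ((1 - ρ ^ h) / (1 - ρ) ^ 2))) := by
  have hρlt : ρ < 1 := lt_of_le_of_lt (le_abs_self ρ) hρ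
  have h1ρ : (1:ℝ) - ρ ≠ 0 := by linarith
  have hρne : ρ ≠ 1 := fun e => absurd hρlt (by rw [e]; exact lt_irrefl 1)
  -- M := T - h tends to atTop
  have hMtop : Tendsto (fun n => T n - h) atTop atTop := by
    rw [tendsto_atTop_atTop] at hT ⊢
    intro b
    obtain ⟨n0, hn0⟩ := hT (b + h)
    exact ⟨n0, fun n hn => by have := hn0 n hn; omega⟩
  have hMR : Tendsto (fun n => ((T n - h : ℕ) : ℝ)) atTop atTop :=
    tendsto_natCast_atTop_atTop.comp hMtop
  -- square-root factor
  have hTT : Tendsto (fun n => (T n : ℝ) / ((T n - h : ℕ) : ℝ)) atTop (𝓝 1) := by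
    have h0 : Tendsto (fun n => 1 + (h : ℝ) / ((T n - h : ℕ) : ℝ)) atTop (𝓝 (1 + 0)) :=
      tendsto_const_nhds.add (Tendsto.div_atTop tendsto_const_nhds hMR)
    rw [add_zero] at h0
    refine h0.congr' ?_
    filter_upwards [hT.eventually_ge_atTop (h + 1)] with n hn
    have hM1 : 1 ≤ T n - h := by omega
    have hMne : ((T n - h : ℕ) : ℝ) ≠ 0 := by
      have : (0:ℝ) < ((T n - h : ℕ) : ℝ) := by exact_mod_cast hM1
      linarith
    have hTn : (T n : ℝ) = ((T n - h : ℕ) : ℝ) + h := by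
      have e : (T n - h) + h = T n := by omega
      have := congrArg (Nat.cast : ℕ → ℝ) e
      push_cast at this
      linarith
    rw [hTn]
    field_simp
  have hratio : Tendsto (fun n => (N n : ℝ) / ((T n - h : ℕ) : ℝ)) atTop (𝓝 c) := by
    have h1 : Tendsto (fun n => (N n : ℝ) / (T n : ℝ) * ((T n : ℝ) / ((T n - h : ℕ) : ℝ)))
        atTop (𝓝 (c * 1)) := hNT.mul hTT
    rw [mul_one] at h1
    refine h1.congr' ?_
    filter_upwards [hT.eventually_ge_atTop 1] with n hn
    have hTne : (T n : ℝ) ≠ 0 := by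
      have : (0:ℝ) < (T n : ℝ) := by exact_mod_cast hn
      linarith
    rw [div_mul_div_comm, mul_comm ((N n : ℝ)) _, mul_div_mul_left _ _ hTne]
  have hsq : Tendsto (fun n => Real.sqrt ((N n : ℝ) / ((T n - h : ℕ) : ℝ))) atTop
      (𝓝 (Real.sqrt c)) := hratio.sqrt
  -- the f part
  have hgeom : Tendsto (fun K => ∑ i ∈ Finset.range K, ρ ^ i) atTop (𝓝 (1 - ρ)⁻¹) :=
    (hasSum_geometric_of_abs_lt_one hρ).tendsto_sum_nat
  have hf : Tendsto (fun n => ∑ s ∈ Finset.range h, ∑ t ∈ Finset.Icc (h - s) (T n - h),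
      (1 - (t : ℝ) / ((T n - h : ℕ) : ℝ)) * ρ ^ (t + 2 * s - h)) atTop
      (𝓝 (∑ s ∈ Finset.range h, ρ ^ s * (1 - ρ)⁻¹)) := by
    apply tendsto_finset_sum
    intro s hs
    have hsh : s < h := Finset.mem_range.mp hs
    set d := h - s with hd
    have hd1 : 1 ≤ d := by omega
    have hds : s + d = h := by omega
    -- rewrite the inner sum eventually
    have key : ∀ᶠ n in atTop,
        (∑ t ∈ Finset.Icc (h - s) (T n - h),
            (1 - (t : ℝ) / ((T n - h : ℕ) : ℝ)) * ρ ^ (t + 2 * s - h))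
        = (∑ i ∈ Finset.range (T n - h + 1 - d), ρ ^ (s + i))
          - ∑ i ∈ Finset.range (T n - h + 1 - d), ((d + i : ℕ) : ℝ) / ((T n - h : ℕ) : ℝ) * ρ ^ (s + i) := by
      filter_upwards [hMtop.eventually_ge_atTop d] with n hn
      rw [← hd, ← Finset.Ico_add_one_right_eq_Icc, Finset.sum_Ico_eq_sum_range, ← Finset.sum_sub_distrib]
      apply Finset.sum_congr rfl
      intro i _
      have he : d + i + 2 * s - h = s + i := by omega
      rw [he]
      ring
    rw [tendsto_congr' key]
    have hK : Tendsto (fun n => T n - h + 1 - d) atTop atTop := by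
      rw [tendsto_atTop_atTop] at hMtop ⊢
      intro b
      obtain ⟨n0, hn0⟩ := hMtop (b + d)
      exact ⟨n0, fun n hn => by have := hn0 n hn; omega⟩
    have h1 : Tendsto (fun n => ∑ i ∈ Finset.range (T n - h + 1 - d), ρ ^ (s + i)) atTop
        (𝓝 (ρ ^ s * (1 - ρ)⁻¹)) := by
      have := (tendsto_const_nhds (x := ρ ^ s)).mul (hgeom.comp hK)
      refine this.congr fun n => ?_
      simp [pow_add, Finset.mul_sum]
    have hsum : Summable (fun i : ℕ => ((d : ℝ) + i) * |ρ| ^ i) := by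
      have ha : Summable (fun i : ℕ => (d : ℝ) * |ρ| ^ i) :=
        (summable_geometric_of_lt_one (abs_nonneg ρ) hρ).mul_left _
      have hb : Summable (fun i : ℕ => (i : ℝ) ^ 1 * |ρ| ^ i) :=
        summable_pow_mul_geometric_of_norm_lt_one 1
          (by rwa [Real.norm_eq_abs, abs_abs])
      have := ha.add hb
      refine this.congr fun i => ?_
      ring
    have h2 : Tendsto (fun n => ∑ i ∈ Finset.range (T n - h + 1 - d),
        ((d + i : ℕ) : ℝ) / ((T n - h : ℕ) : ℝ) * ρ ^ (s + i)) atTop (𝓝 0) := by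
      refine squeeze_zero_norm' (a := fun n => (∑' i : ℕ, ((d : ℝ) + i) * |ρ| ^ i) / ((T n - h : ℕ) : ℝ)) ?_ ?_
      · filter_upwards [hMtop.eventually_ge_atTop 1] with n hn
        have hMpos : (0:ℝ) < ((T n - h : ℕ) : ℝ) := by exact_mod_cast hn
        calc ‖∑ i ∈ Finset.range (T n - h + 1 - d),
              ((d + i : ℕ) : ℝ) / ((T n - h : ℕ) : ℝ) * ρ ^ (s + i)‖
            ≤ ∑ i ∈ Finset.range (T n - h + 1 - d),
              ‖((d + i : ℕ) : ℝ) / ((T n - h : ℕ) : ℝ) * ρ ^ (s + i)‖ := norm_sum_le _ _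
          _ ≤ ∑ i ∈ Finset.range (T n - h + 1 - d),
              (((d : ℝ) + i) * |ρ| ^ i) / ((T n - h : ℕ) : ℝ) := by
              apply Finset.sum_le_sum
              intro i _
              rw [norm_mul, norm_div, Real.norm_eq_abs, Real.norm_eq_abs, Real.norm_eq_abs,
                abs_pow, abs_of_nonneg hMpos.le, Nat.abs_cast, div_mul_eq_mul_div]
              apply div_le_div_of_nonneg_right ?_ hMpos.le |>.trans_eq rfl
              have hp : |ρ| ^ (s + i) ≤ |ρ| ^ i :=
                pow_le_pow_of_le_one (abs_nonneg ρ) hρ.le (Nat.le_add_left i s)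
              have : ((d + i : ℕ) : ℝ) = (d : ℝ) + i := by push_cast; ring
              rw [this]
              have hdi : (0:ℝ) ≤ (d : ℝ) + i := by positivity
              exact mul_le_mul_of_nonneg_left hp hdi
          _ = (∑ i ∈ Finset.range (T n - h + 1 - d), ((d : ℝ) + i) * |ρ| ^ i) / ((T n - h : ℕ) : ℝ) := by
              rw [Finset.sum_div]
          _ ≤ (∑' i : ℕ, ((d : ℝ) + i) * |ρ| ^ i) / ((T n - h : ℕ) : ℝ) := by
              apply div_le_div_of_nonneg_right ?_ hMpos.le |>.trans_eq rfl
              exact Summable.sum_le_tsum _ (fun i _ => by positivity) hsum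
      · exact Tendsto.div_atTop tendsto_const_nhds hMR
    have := h1.sub h2
    rwa [sub_zero] at this
  have hmul := hsq.mul hf
  have hval : (∑ s ∈ Finset.range h, ρ ^ s * (1 - ρ)⁻¹) = (1 - ρ ^ h) / (1 - ρ) ^ 2 := by
    rw [← Finset.sum_mul, geom_sum_eq hρne h]
    have hne : ρ - 1 ≠ 0 := fun e => hρne (by linarith [sub_eq_zero.mp e])
    field_simp
    ring
  rwa [hval] at hmul
end

section
/- Let T ≥ h ≥ 1 be integers with T_h := T − h ≥ 1 and let ρ ∈ ℝ, σ > 0 (with the convention 0^0 = 1). Let u_0, u_1, …, u_T be square-integrable real random variables with E[u_a] = 0 for all a and E[u_a u_b] = σ² · 1{a = b} for all a, b. Let (m_t)_{t=0}^{T_h} be real numbers and define x_t := m_t + Σ_{ℓ=0}^{t} ρ^ℓ u_{t−ℓ} and x̄ := T_h^{−1} Σ_{t=1}^{T_h} x_t. Then for every integer s with 0 ≤ s ≤ h − 1, Σ_{t=1}^{T_h} E[ x̄ · u_{t+h−s} ] = (σ² / T_h) Σ_{t=h−s}^{T_h} (T_h − t) ρ^{t−(h−s)}. -/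
/-!
By linearity, `E[x_r u_a] = σ² ρ^(r-a)` if `a ≤ r` and `0` otherwise: only the lag `ℓ = r - a`
term of the moving average is correlated with `u_a`, and the deterministic part `m_r` is killed
by `E[u_a] = 0`. Hence the pair `(t, r)` contributes `σ² ρ^(r - t - (h - s)) / T_h` exactly when
`r - t ≥ h - s`, and a lag `k = r - t` is realised by `T_h - k` pairs `1 ≤ t, r ≤ T_h`.
-/

open MeasureTheory Finset

section Lags

variable {R : Type*} [CommRing R]

theorem sum_range_sum_range_sub {M N : ℕ} (hNM : N ≤ M) (f : ℕ → R) :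
    ∑ i ∈ range M, ∑ j ∈ range (N - i), f j = ∑ j ∈ range N, ((N : R) - j) * f j := by
  induction N generalizing M with
  | zero => simp
  | succ N ih =>
    obtain ⟨M, rfl⟩ : ∃ M', M = M' + 1 := ⟨M - 1, by omega⟩
    have hshift : ∀ i, N + 1 - (i + 1) = N - i := fun i => by omega
    rw [sum_range_succ', Nat.sub_zero]
    simp only [hshift]
    rw [ih (by omega), sum_range_succ, sum_range_succ, ← add_assoc, ← sum_add_distrib]
    push_cast
    congr 1
    · exact sum_congr rfl fun j _ => by ring
    · ring

theorem sum_Icc_sum_Icc_lag (n d : ℕ) (f : ℕ → R) :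
    ∑ t ∈ Icc 1 n, ∑ r ∈ Icc (t + d) n, f (r - (t + d))
      = ∑ k ∈ Icc d n, ((n : R) - k) * f (k - d) := by
  have hinner : ∀ t ∈ Icc 1 n, ∑ r ∈ Icc (t + d) n, f (r - (t + d))
      = ∑ j ∈ range (n - d - (t - 1)), f j := by
    intro t ht
    rw [mem_Icc] at ht
    rw [← Ico_add_one_right_eq_Icc, sum_Ico_eq_sum_range,
      show n + 1 - (t + d) = n - d - (t - 1) by omega]
    simp only [add_tsub_cancel_left]
  have hIco : ∑ k ∈ Ico d n, ((n : R) - k) * f (k - d)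
      = ∑ k ∈ Icc d n, ((n : R) - k) * f (k - d) :=
    sum_subset Ico_subset_Icc_self fun k hk hk' => by
      obtain rfl : k = n := by simp only [mem_Icc, mem_Ico] at hk hk'; omega
      simp
  rw [sum_congr rfl hinner, ← hIco, ← Ico_add_one_right_eq_Icc, sum_Ico_eq_sum_range,
    sum_Ico_eq_sum_range, Nat.add_sub_cancel]
  simp only [add_tsub_cancel_left]
  rw [sum_range_sum_range_sub (by omega)]
  refine sum_congr rfl fun j hj => ?_
  rw [mem_range] at hj
  push_cast [Nat.cast_sub (by omega : d ≤ n)]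
  ring

end Lags

section MovingAverage

variable {Ω : Type*} [MeasurableSpace Ω] {μ : Measure Ω} [IsFiniteMeasure μ]
  {N : ℕ} {σ : ℝ} {u : ℕ → Ω → ℝ} {c ψ : ℕ → ℝ} {X : ℕ → Ω → ℝ}

theorem memLp_two_movingAverage (huL2 : ∀ a ∈ range (N + 1), MemLp (u a) 2 μ)
    (hX : ∀ r, X r = fun ω => c r + ∑ ℓ ∈ range (r + 1), ψ ℓ * u (r - ℓ) ω)
    {r : ℕ} (hr : r ≤ N) : MemLp (X r) 2 μ := by
  rw [hX]
  refine (memLp_const (c r)).add (memLp_finsetSum _ fun ℓ hℓ => ?_)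
  exact (huL2 (r - ℓ) (by rw [mem_range]; omega)).const_mul (ψ ℓ)

theorem integral_movingAverage_mul (huL2 : ∀ a ∈ range (N + 1), MemLp (u a) 2 μ)
    (humean : ∀ a ∈ range (N + 1), ∫ ω, u a ω ∂μ = 0)
    (hucov : ∀ a ∈ range (N + 1), ∀ b ∈ range (N + 1),
      ∫ ω, u a ω * u b ω ∂μ = if a = b then σ ^ 2 else 0)
    (hX : ∀ r, X r = fun ω => c r + ∑ ℓ ∈ range (r + 1), ψ ℓ * u (r - ℓ) ω)
    {r a : ℕ} (hr : r ≤ N) (ha : a ≤ N) :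
    ∫ ω, X r ω * u a ω ∂μ = if a ≤ r then σ ^ 2 * ψ (r - a) else 0 := by
  have hlag : ∀ ℓ ∈ range (r + 1), r - ℓ ∈ range (N + 1) := fun ℓ hℓ => by
    rw [mem_range] at hℓ ⊢; omega
  have ha' : a ∈ range (N + 1) := by rw [mem_range]; omega
  have hterm : ∀ ℓ ∈ range (r + 1), Integrable (fun ω => ψ ℓ * (u (r - ℓ) ω * u a ω)) μ :=
    fun ℓ hℓ => ((huL2 _ (hlag ℓ hℓ)).integrable_mul (huL2 a ha')).const_mul (ψ ℓ)
  calc ∫ ω, X r ω * u a ω ∂μ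
      = ∫ ω, c r * u a ω + ∑ ℓ ∈ range (r + 1), ψ ℓ * (u (r - ℓ) ω * u a ω) ∂μ := by
        simp only [hX, add_mul, sum_mul, mul_assoc]
    _ = ∑ ℓ ∈ range (r + 1), ψ ℓ * if r - ℓ = a then σ ^ 2 else 0 := by
        rw [integral_add (((huL2 a ha').integrable one_le_two).const_mul _)
          (integrable_finsetSum _ hterm), integral_const_mul, humean a ha', mul_zero, zero_add,
          integral_finsetSum _ hterm]
        refine sum_congr rfl fun ℓ hℓ => ?_
        rw [integral_const_mul, hucov _ (hlag ℓ hℓ) a ha']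
    _ = if a ≤ r then σ ^ 2 * ψ (r - a) else 0 := by
        split_ifs with har
        · rw [sum_eq_single_of_mem (r - a) (by rw [mem_range]; omega) fun ℓ hℓ hne => by
            rw [mem_range] at hℓ; rw [if_neg (by omega), mul_zero]]
          rw [if_pos (by omega), mul_comm]
        · exact sum_eq_zero fun ℓ hℓ => by rw [if_neg (by omega), mul_zero]

theorem integral_average_movingAverage_mul (huL2 : ∀ a ∈ range (N + 1), MemLp (u a) 2 μ)
    (humean : ∀ a ∈ range (N + 1), ∫ ω, u a ω ∂μ = 0)
    (hucov : ∀ a ∈ range (N + 1), ∀ b ∈ range (N + 1),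
      ∫ ω, u a ω * u b ω ∂μ = if a = b then σ ^ 2 else 0)
    (hX : ∀ r, X r = fun ω => c r + ∑ ℓ ∈ range (r + 1), ψ ℓ * u (r - ℓ) ω)
    {n a : ℕ} (hn : n ≤ N) (ha : 1 ≤ a) (haN : a ≤ N) :
    ∫ ω, ((n : ℝ)⁻¹ * ∑ r ∈ Icc 1 n, X r ω) * u a ω ∂μ
      = (n : ℝ)⁻¹ * σ ^ 2 * ∑ r ∈ Icc a n, ψ (r - a) := by
  have hint : ∀ r ∈ Icc 1 n, Integrable (fun ω => X r ω * u a ω) μ := fun r hr =>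
    (memLp_two_movingAverage huL2 hX (by rw [mem_Icc] at hr; omega)).integrable_mul
      (huL2 a (by rw [mem_range]; omega))
  have hfilter : {r ∈ Icc 1 n | a ≤ r} = Icc a n := by
    ext r; simp only [mem_filter, mem_Icc]; omega
  calc ∫ ω, ((n : ℝ)⁻¹ * ∑ r ∈ Icc 1 n, X r ω) * u a ω ∂μ
      = (n : ℝ)⁻¹ * ∑ r ∈ Icc 1 n, ∫ ω, X r ω * u a ω ∂μ := by
        simp only [mul_assoc, sum_mul]
        rw [integral_const_mul, integral_finsetSum _ hint]
    _ = (n : ℝ)⁻¹ * ∑ r ∈ Icc 1 n, if a ≤ r then σ ^ 2 * ψ (r - a) else 0 := by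
        congr 1
        refine sum_congr rfl fun r hr => ?_
        rw [mem_Icc] at hr
        exact integral_movingAverage_mul huL2 humean hucov hX (by omega) haN
    _ = (n : ℝ)⁻¹ * σ ^ 2 * ∑ r ∈ Icc a n, ψ (r - a) := by
        rw [← sum_filter, hfilter, ← mul_sum, mul_assoc]

end MovingAverage

theorem xbar_future_innovation_covariance_general
    {Ω : Type*} [m0 : MeasurableSpace Ω] (μ : Measure Ω) [IsProbabilityMeasure μ]
    (T h : ℕ)
    (ρ σ : ℝ)
    (u : ℕ → Ω → ℝ)
    (huL2 : ∀ a ∈ Finset.range (T + 1), MemLp (u a) 2 μ)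
    (humean : ∀ a ∈ Finset.range (T + 1), ∫ ω, u a ω ∂μ = 0)
    (hucov : ∀ a ∈ Finset.range (T + 1), ∀ b ∈ Finset.range (T + 1),
      ∫ ω, u a ω * u b ω ∂μ = if a = b then σ ^ 2 else 0)
    (m : ℕ → ℝ) (x : ℕ → Ω → ℝ)
    (hx : ∀ t, x t = fun ω => m t + ∑ ℓ ∈ Finset.range (t + 1), ρ ^ ℓ * u (t - ℓ) ω)
    (xbar : Ω → ℝ)
    (hxbar : xbar = fun ω => ((T - h : ℕ) : ℝ)⁻¹ * ∑ t ∈ Finset.Icc 1 (T - h), x t ω)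
    (s : ℕ) (hs : s ≤ h - 1) :
    ∑ t ∈ Finset.Icc 1 (T - h), ∫ ω, xbar ω * u (t + h - s) ω ∂μ
      = σ ^ 2 / ((T - h : ℕ) : ℝ)
        * ∑ t ∈ Finset.Icc (h - s) (T - h), (((T - h : ℕ) : ℝ) - (t : ℝ)) * ρ ^ (t - (h - s)) := by
  subst hxbar
  calc _
      = ∑ t ∈ Icc 1 (T - h), ((T - h : ℕ) : ℝ)⁻¹ * σ ^ 2
          * ∑ r ∈ Icc (t + (h - s)) (T - h), ρ ^ (r - (t + (h - s))) := by
        refine sum_congr rfl fun t ht => ?_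
        rw [mem_Icc] at ht
        rw [show t + h - s = t + (h - s) by omega]
        exact integral_average_movingAverage_mul (ψ := (ρ ^ ·)) huL2 humean hucov hx
          (by omega) (by omega) (by omega)
    _ = _ := by
        rw [← mul_sum, sum_Icc_sum_Icc_lag, div_eq_mul_inv, mul_comm (σ ^ 2)]

/-- Covariance between the time average of the MA-representation regressor
`x_t = m_t + Σ_{ℓ=0}^{t} ρ^ℓ u_{t−ℓ}` and future innovations:
`Σ_{t=1}^{T_h} E[x̄ u_{t+h−s}] = (σ²/T_h) Σ_{t=h−s}^{T_h} (T_h − t) ρ^{t−(h−s)}`. -/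
theorem xbar_future_innovation_covariance
    {Ω : Type*} [m0 : MeasurableSpace Ω] (μ : Measure Ω) [IsProbabilityMeasure μ]
    (T h : ℕ) (hh : 1 ≤ h) (hhT : h ≤ T) (hTh : 1 ≤ T - h)
    (ρ σ : ℝ) (hσ : 0 < σ)
    (u : ℕ → Ω → ℝ)
    (huL2 : ∀ a ∈ Finset.range (T + 1), MemLp (u a) 2 μ)
    (humean : ∀ a ∈ Finset.range (T + 1), ∫ ω, u a ω ∂μ = 0)
    (hucov : ∀ a ∈ Finset.range (T + 1), ∀ b ∈ Finset.range (T + 1),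
      ∫ ω, u a ω * u b ω ∂μ = if a = b then σ ^ 2 else 0)
    (m : ℕ → ℝ) (x : ℕ → Ω → ℝ)
    (hx : ∀ t, x t = fun ω => m t + ∑ ℓ ∈ Finset.range (t + 1), ρ ^ ℓ * u (t - ℓ) ω)
    (xbar : Ω → ℝ)
    (hxbar : xbar = fun ω => ((T - h : ℕ) : ℝ)⁻¹ * ∑ t ∈ Finset.Icc 1 (T - h), x t ω)
    (s : ℕ) (hs : s ≤ h - 1) :
    ∑ t ∈ Finset.Icc 1 (T - h), ∫ ω, xbar ω * u (t + h - s) ω ∂μ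
      = σ ^ 2 / ((T - h : ℕ) : ℝ)
        * ∑ t ∈ Finset.Icc (h - s) (T - h), (((T - h : ℕ) : ℝ) - (t : ℝ)) * ρ ^ (t - (h - s)) :=
  xbar_future_innovation_covariance_general (m0 := m0) μ T h ρ σ u huL2 humean hucov m x hx xbar
    hxbar s hs
end

section
/- Let T ≥ 2h and h ≥ 1 be integers with T_h := T − h, let ρ, β⁰ ∈ ℝ and σ > 0 (with the convention 0^0 = 1). Let u_0, u_1, …, u_T be square-integrable real random variables with E[u_a] = 0 and E[u_a u_b] = σ² · 1{a = b} for all a, b, and let u^y_1, …, u^y_T be square-integrable real random variables with E[u^y_n] = 0 and E[u^y_n u_a] = 0 for all n, a. Let (m_t) be real numbers, x_t := m_t + Σ_{ℓ=0}^{t} ρ^ℓ u_{t−ℓ}, x̄ := T_h^{−1} Σ_{t=1}^{T_h} x_t, x̃_t := x_t − x̄, and e^{(h)}_{t+h} := u^y_{t+h} + β⁰ Σ_{s=0}^{h−1} ρ^s u_{t+h−s}. Then Σ_{t=1}^{T_h} E[ x̃_t e^{(h)}_{t+h} ] = − β⁰ σ² f_{T,h}(ρ), where f_{T,h}(ρ)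 := Σ_{s=0}^{h−1} Σ_{t=h−s}^{T−h} (1 − t/(T−h)) ρ^{t−h+2s}. -/
/-!
Expanding both factors in the innovations, bilinearity of second moments reduces everything to
`E[u_a u_b] = σ² 1{a = b}`: the level `m_r` drops out because `E[e^{(h)}_{t+h}] = 0`, and `u^y`
drops out because it is uncorrelated with `u`. This gives
`E[x_r e^{(h)}_{t+h}] = β⁰ σ² Σ_{s < h, t + h ≤ r + s} ρ^{r + 2s - t - h}`,
which vanishes for `r = t` since the regressor is predetermined. So the score's mean comes only
from the demeaning term `-T_h⁻¹ Σ_r E[x_r e^{(h)}_{t+h}]`, and counting the `T_h - k` pairs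
`(t, r)` with lag `r - t = k` produces the weights `1 - k / T_h` of `f_{T,h}`.
-/

open MeasureTheory Finset

section SecondMoments

variable {Ω ι : Type*} [MeasurableSpace Ω] {μ : Measure Ω}

theorem MeasureTheory.MemLp.integrable_mul_two {f g : Ω → ℝ} (hf : MemLp f 2 μ) (hg : MemLp g 2 μ) :
    Integrable (fun ω => f ω * g ω) μ :=
  hf.integrable_mul hg

theorem integral_finset_sum_mul_of_memLp_two {s : Finset ι} {f : ι → Ω → ℝ} {g : Ω → ℝ}
    (c : ι → ℝ) (hf : ∀ i ∈ s, MemLp (f i) 2 μ) (hg : MemLp g 2 μ) :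
    ∫ ω, (∑ i ∈ s, c i * f i ω) * g ω ∂μ = ∑ i ∈ s, c i * ∫ ω, f i ω * g ω ∂μ := by
  simp_rw [sum_mul, mul_assoc]
  rw [integral_finsetSum _ fun i hi => ((hf i hi).integrable_mul_two hg).const_mul (c i)]
  simp_rw [integral_const_mul]

theorem integral_mul_finset_sum_of_memLp_two {s : Finset ι} {f : ι → Ω → ℝ} {g : Ω → ℝ}
    (c : ι → ℝ) (hg : MemLp g 2 μ) (hf : ∀ i ∈ s, MemLp (f i) 2 μ) :
    ∫ ω, g ω * ∑ i ∈ s, c i * f i ω ∂μ = ∑ i ∈ s, c i * ∫ ω, g ω * f i ω ∂μ := by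
  simp_rw [mul_comm (g _)]
  exact integral_finset_sum_mul_of_memLp_two c hf hg

theorem integral_sub_const_mul_finset_sum_mul_of_memLp_two {s : Finset ι} {f : Ω → ℝ}
    {F : ι → Ω → ℝ} {g : Ω → ℝ} (c : ℝ) (hf : MemLp f 2 μ) (hF : ∀ i ∈ s, MemLp (F i) 2 μ)
    (hg : MemLp g 2 μ) :
    ∫ ω, (f ω - c * ∑ i ∈ s, F i ω) * g ω ∂μ
      = ∫ ω, f ω * g ω ∂μ - c * ∑ i ∈ s, ∫ ω, F i ω * g ω ∂μ := by
  have hF_int : Integrable (fun ω => (∑ i ∈ s, c * F i ω) * g ω) μ := by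
    simp_rw [sum_mul, mul_assoc]
    exact integrable_finsetSum _ fun i hi => ((hF i hi).integrable_mul_two hg).const_mul c
  simp_rw [mul_sum, sub_mul]
  rw [integral_sub (hf.integrable_mul_two hg) hF_int,
    integral_finset_sum_mul_of_memLp_two _ hF hg]

end SecondMoments

theorem Finset.sum_range_succ_ite_sub_eq {M : Type*} [AddCommMonoid M] (r k : ℕ) (f : ℕ → M) :
    ∑ ℓ ∈ range (r + 1), (if r - ℓ = k then f ℓ else 0) = if k ≤ r then f (r - k) else 0 := by
  split_ifs with hk
  · refine (sum_eq_single_of_mem (r - k) (mem_range.2 (by omega)) fun ℓ hℓ hne => ?_).trans ?_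
    · exact if_neg (by have := mem_range.1 hℓ; omega)
    · exact if_pos (by omega)
  · exact sum_eq_zero fun ℓ hℓ => if_neg (by have := mem_range.1 hℓ; omega)

theorem Finset.sum_Icc_sum_Icc_ite_add_le (N c : ℕ) {M : Type*} [AddCommMonoid M] (g : ℕ → M) :
    ∑ t ∈ Icc 1 N, ∑ r ∈ Icc 1 N, (if t + c ≤ r then g (r - t) else 0)
      = ∑ k ∈ Icc c N, (N - k) • g k := by
  have hshift : ∀ t ∈ Icc 1 N, ∑ r ∈ Icc 1 N, (if t + c ≤ r then g (r - t) else 0)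
      = ∑ k ∈ Icc c N, if t + k ≤ N then g k else 0 := by
    intro t ht
    rw [← sum_filter, ← sum_filter]
    refine sum_nbij' (· - t) (· + t) ?_ ?_ ?_ ?_ ?_ <;> intro a ha <;>
      simp only [mem_filter, mem_Icc] at ha ht ⊢ <;> omega
  rw [sum_congr rfl hshift, sum_comm]
  refine sum_congr rfl fun k hk => ?_
  rw [← sum_filter, sum_const]
  congr 1
  rw [show (Icc 1 N).filter (fun t => t + k ≤ N) = Icc 1 (N - k) by ext; simp; omega]
  simp

/-- The bias function `f_{T,h}(ρ)`, indexed by `N = T_h = T - h`. -/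
noncomputable def lpBiasFunction (N h : ℕ) (ρ : ℝ) : ℝ :=
  ∑ s ∈ range h, ∑ t ∈ Icc (h - s) N, (1 - (t : ℝ) / N) * ρ ^ (t + 2 * s - h)

theorem lpBiasFunction_eq (N h : ℕ) (ρ : ℝ) :
    lpBiasFunction N h ρ = (N : ℝ)⁻¹ * ∑ t ∈ Icc 1 N, ∑ r ∈ Icc 1 N, ∑ s ∈ range h,
      if t + h ≤ r + s then ρ ^ (r + 2 * s - (t + h)) else 0 := by
  have hswap : ∀ f : ℕ → ℕ → ℕ → ℝ, ∑ t ∈ Icc 1 N, ∑ r ∈ Icc 1 N, ∑ s ∈ range h, f t r s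
      = ∑ s ∈ range h, ∑ t ∈ Icc 1 N, ∑ r ∈ Icc 1 N, f t r s := fun f => by
    simp_rw [sum_comm (s := Icc 1 N) (t := range h)]
  rw [hswap, mul_sum, lpBiasFunction]
  refine sum_congr rfl fun s hs => ?_
  have hsh : s < h := mem_range.1 hs
  have hshift : ∀ t r, (if t + h ≤ r + s then ρ ^ (r + 2 * s - (t + h)) else 0)
      = if t + (h - s) ≤ r then ρ ^ ((r - t) + 2 * s - h) else 0 := by
    intro t r
    split_ifs
    · congr 1; omega
    · omega
    · omega
    · rfl
  rw [sum_congr rfl fun t _ => sum_congr rfl fun r _ => hshift t r,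
    sum_Icc_sum_Icc_ite_add_le N (h - s) fun k => ρ ^ (k + 2 * s - h),
    mul_sum]
  refine sum_congr rfl fun k hk => ?_
  obtain ⟨hsk, hkN⟩ := mem_Icc.1 hk
  have hN : (N : ℝ) ≠ 0 := Nat.cast_ne_zero.2 (by omega)
  rw [nsmul_eq_mul, Nat.cast_sub hkN]
  field_simp

section PanelModel

variable {Ω : Type*} [MeasurableSpace Ω] {μ : Measure Ω}

def arRegressor (m : ℕ → ℝ) (ρ : ℝ) (u : ℕ → Ω → ℝ) (t : ℕ) : Ω → ℝ := fun ω =>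
  m t + ∑ ℓ ∈ range (t + 1), ρ ^ ℓ * u (t - ℓ) ω

/-- The local-projection error `e^{(h)}_{t+h}`, indexed by `t`. -/
def lpError (uy u : ℕ → Ω → ℝ) (ρ β0 : ℝ) (h t : ℕ) : Ω → ℝ := fun ω =>
  uy (t + h) ω + β0 * ∑ s ∈ range h, ρ ^ s * u (t + h - s) ω

variable {T : ℕ} {u uy : ℕ → Ω → ℝ}

theorem memLp_arRegressor [IsFiniteMeasure μ] (m : ℕ → ℝ) (ρ : ℝ)
    (huL2 : ∀ a ∈ range (T + 1), MemLp (u a) 2 μ) {r : ℕ} (hr : r ≤ T) :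
    MemLp (arRegressor m ρ u r) 2 μ := by
  unfold arRegressor
  exact (memLp_const (m r)).add <| memLp_finsetSum _ fun ℓ _ =>
    (huL2 _ (mem_range.2 (by omega))).const_mul _

theorem memLp_lpError (ρ β0 : ℝ) {h t : ℕ} (huL2 : ∀ a ∈ range (T + 1), MemLp (u a) 2 μ)
    (huyL2 : ∀ n ∈ Icc 1 T, MemLp (uy n) 2 μ) (ht : t + h ∈ Icc 1 T) :
    MemLp (lpError uy u ρ β0 h t) 2 μ := by
  have hu : ∀ s ∈ range h, MemLp (fun ω => ρ ^ s * u (t + h - s) ω) 2 μ := fun s _ =>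
    (huL2 _ (mem_range.2 (by have := (mem_Icc.1 ht).2; omega))).const_mul _
  exact (huyL2 _ ht).add ((memLp_finsetSum _ hu).const_mul β0)

theorem integral_lpError_eq_zero [IsFiniteMeasure μ] (ρ β0 : ℝ) {h t : ℕ}
    (huL2 : ∀ a ∈ range (T + 1), MemLp (u a) 2 μ) (humean : ∀ a ∈ range (T + 1), ∫ ω, u a ω ∂μ = 0)
    (huyL2 : ∀ n ∈ Icc 1 T, MemLp (uy n) 2 μ) (huymean : ∀ n ∈ Icc 1 T, ∫ ω, uy n ω ∂μ = 0)
    (ht : t + h ∈ Icc 1 T) :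
    ∫ ω, lpError uy u ρ β0 h t ω ∂μ = 0 := by
  have hu : ∀ s ∈ range h, t + h - s ∈ range (T + 1) := fun s _ =>
    mem_range.2 (by have := (mem_Icc.1 ht).2; omega)
  have hu_int : ∀ s ∈ range h, Integrable (fun ω => ρ ^ s * u (t + h - s) ω) μ := fun s hs =>
    ((huL2 _ (hu s hs)).integrable one_le_two).const_mul _
  unfold lpError
  rw [integral_add ((huyL2 _ ht).integrable one_le_two)
      ((integrable_finsetSum _ hu_int).const_mul β0), integral_const_mul,
    integral_finsetSum _ hu_int, huymean _ ht,
    sum_eq_zero fun s hs => by rw [integral_const_mul, humean _ (hu s hs), mul_zero]]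
  simp

theorem integral_mul_lpError {σ : ℝ} (ρ β0 : ℝ) {a h t : ℕ}
    (huL2 : ∀ a ∈ range (T + 1), MemLp (u a) 2 μ)
    (hucov : ∀ a ∈ range (T + 1), ∀ b ∈ range (T + 1),
      ∫ ω, u a ω * u b ω ∂μ = if a = b then σ ^ 2 else 0)
    (huyL2 : ∀ n ∈ Icc 1 T, MemLp (uy n) 2 μ)
    (huyucov : ∀ n ∈ Icc 1 T, ∀ a ∈ range (T + 1), ∫ ω, uy n ω * u a ω ∂μ = 0)
    (ha : a ∈ range (T + 1)) (ht : t + h ∈ Icc 1 T) :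
    ∫ ω, u a ω * lpError uy u ρ β0 h t ω ∂μ
      = β0 * σ ^ 2 * ∑ s ∈ range h, if a = t + h - s then ρ ^ s else 0 := by
  have hu : ∀ s ∈ range h, t + h - s ∈ range (T + 1) := fun s _ =>
    mem_range.2 (by have := (mem_Icc.1 ht).2; omega)
  have hu_int : Integrable (fun ω => u a ω * ∑ s ∈ range h, ρ ^ s * u (t + h - s) ω) μ :=
    (huL2 a ha).integrable_mul_two
      (memLp_finsetSum _ fun s hs => (huL2 _ (hu s hs)).const_mul (ρ ^ s))
  unfold lpError
  simp_rw [mul_add, mul_left_comm (u a _) β0]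
  rw [integral_add ((huL2 a ha).integrable_mul_two (huyL2 _ ht)) (hu_int.const_mul β0),
    integral_const_mul,
    integral_mul_finset_sum_of_memLp_two _ (huL2 a ha) fun s hs => huL2 _ (hu s hs)]
  have huy : ∫ ω, u a ω * uy (t + h) ω ∂μ = 0 := by
    simp_rw [mul_comm (u a _)]
    exact huyucov _ ht a ha
  rw [huy, zero_add, mul_assoc]
  congr 1
  rw [mul_sum]
  refine sum_congr rfl fun s hs => ?_
  rw [hucov a ha _ (hu s hs)]
  split_ifs <;> ring

theorem integral_arRegressor_mul_lpError [IsFiniteMeasure μ] {σ : ℝ} (m : ℕ → ℝ) (ρ β0 : ℝ)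
    {h r t : ℕ}
    (huL2 : ∀ a ∈ range (T + 1), MemLp (u a) 2 μ) (humean : ∀ a ∈ range (T + 1), ∫ ω, u a ω ∂μ = 0)
    (hucov : ∀ a ∈ range (T + 1), ∀ b ∈ range (T + 1),
      ∫ ω, u a ω * u b ω ∂μ = if a = b then σ ^ 2 else 0)
    (huyL2 : ∀ n ∈ Icc 1 T, MemLp (uy n) 2 μ) (huymean : ∀ n ∈ Icc 1 T, ∫ ω, uy n ω ∂μ = 0)
    (huyucov : ∀ n ∈ Icc 1 T, ∀ a ∈ range (T + 1), ∫ ω, uy n ω * u a ω ∂μ = 0)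
    (hr : r ≤ T) (ht : t + h ∈ Icc 1 T) :
    ∫ ω, arRegressor m ρ u r ω * lpError uy u ρ β0 h t ω ∂μ
      = β0 * σ ^ 2 * ∑ s ∈ range h, if t + h ≤ r + s then ρ ^ (r + 2 * s - (t + h)) else 0 := by
  have hu : ∀ ℓ ∈ range (r + 1), r - ℓ ∈ range (T + 1) := fun ℓ _ => mem_range.2 (by omega)
  have he := memLp_lpError ρ β0 huL2 huyL2 ht
  have hsum_int : Integrable
      (fun ω => (∑ ℓ ∈ range (r + 1), ρ ^ ℓ * u (r - ℓ) ω) * lpError uy u ρ β0 h t ω) μ :=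
    (memLp_finsetSum _ fun ℓ hℓ => (huL2 _ (hu ℓ hℓ)).const_mul (ρ ^ ℓ)).integrable_mul_two he
  unfold arRegressor
  simp_rw [add_mul]
  rw [integral_add ((he.integrable one_le_two).const_mul (m r)) hsum_int, integral_const_mul,
    integral_lpError_eq_zero ρ β0 huL2 humean huyL2 huymean ht, mul_zero, zero_add,
    integral_finset_sum_mul_of_memLp_two _ (fun ℓ hℓ => huL2 _ (hu ℓ hℓ)) he]
  rw [sum_congr rfl fun ℓ hℓ => by
    rw [integral_mul_lpError ρ β0 huL2 hucov huyL2 huyucov (hu ℓ hℓ) ht]]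
  have hinner : ∀ s ∈ range h,
      ∑ ℓ ∈ range (r + 1), (if r - ℓ = t + h - s then ρ ^ ℓ * ρ ^ s else 0)
        = if t + h ≤ r + s then ρ ^ (r + 2 * s - (t + h)) else 0 := by
    intro s hs
    have hsh := mem_range.1 hs
    rw [sum_range_succ_ite_sub_eq, ← pow_add]
    split_ifs
    · congr 1; omega
    · omega
    · omega
    · rfl
  calc _ = β0 * σ ^ 2 * ∑ s ∈ range h, ∑ ℓ ∈ range (r + 1),
          (if r - ℓ = t + h - s then ρ ^ ℓ * ρ ^ s else 0) := by
        simp_rw [mul_sum]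
        rw [sum_comm]
        refine sum_congr rfl fun s _ => sum_congr rfl fun ℓ _ => ?_
        split_ifs <;> ring
    _ = _ := by rw [sum_congr rfl hinner]

end PanelModel

theorem demeaned_score_first_moment_general
    {Ω : Type*} [m0 : MeasurableSpace Ω] (μ : Measure Ω) [IsProbabilityMeasure μ]
    (T h : ℕ)
    (ρ β0 σ : ℝ)
    (u : ℕ → Ω → ℝ)
    (huL2 : ∀ a ∈ Finset.range (T + 1), MemLp (u a) 2 μ)
    (humean : ∀ a ∈ Finset.range (T + 1), ∫ ω, u a ω ∂μ = 0)
    (hucov : ∀ a ∈ Finset.range (T + 1), ∀ b ∈ Finset.range (T + 1),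
      ∫ ω, u a ω * u b ω ∂μ = if a = b then σ ^ 2 else 0)
    (uy : ℕ → Ω → ℝ)
    (huyL2 : ∀ n ∈ Finset.Icc 1 T, MemLp (uy n) 2 μ)
    (huymean : ∀ n ∈ Finset.Icc 1 T, ∫ ω, uy n ω ∂μ = 0)
    (huyucov : ∀ n ∈ Finset.Icc 1 T, ∀ a ∈ Finset.range (T + 1),
      ∫ ω, uy n ω * u a ω ∂μ = 0)
    (m : ℕ → ℝ) (x : ℕ → Ω → ℝ)
    (hx : ∀ t, x t = fun ω => m t + ∑ ℓ ∈ Finset.range (t + 1), ρ ^ ℓ * u (t - ℓ) ω)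
    (xbar : Ω → ℝ)
    (hxbar : xbar = fun ω => ((T - h : ℕ) : ℝ)⁻¹ * ∑ t ∈ Finset.Icc 1 (T - h), x t ω)
    (xtil : ℕ → Ω → ℝ) (hxtil : ∀ t, xtil t = fun ω => x t ω - xbar ω)
    (e : ℕ → Ω → ℝ)
    (he : ∀ t, e t = fun ω =>
      uy (t + h) ω + β0 * ∑ s ∈ Finset.range h, ρ ^ s * u (t + h - s) ω) :
    ∑ t ∈ Finset.Icc 1 (T - h), ∫ ω, xtil t ω * e t ω ∂μ
      = -β0 * σ ^ 2
          * ∑ s ∈ Finset.range h, ∑ t ∈ Finset.Icc (h - s) (T - h),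
              (1 - (t : ℝ) / ((T - h : ℕ) : ℝ)) * ρ ^ (t + 2 * s - h) := by
  obtain rfl : x = arRegressor m ρ u := funext hx
  obtain rfl : e = lpError uy u ρ β0 h := funext he
  simp only [hxtil, hxbar]
  set N := T - h
  have hlead : ∀ t ∈ Icc 1 N, t + h ∈ Icc 1 T := fun t ht => by
    simp only [mem_Icc] at ht ⊢; omega
  have hx_mem : ∀ r ∈ Icc 1 N, MemLp (arRegressor m ρ u r) 2 μ := fun r hr =>
    memLp_arRegressor m ρ huL2 (by have := mem_Icc.1 hr; omega)
  have hcov : ∀ t ∈ Icc 1 N, ∀ r ∈ Icc 1 N,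
      ∫ ω, arRegressor m ρ u r ω * lpError uy u ρ β0 h t ω ∂μ = β0 * σ ^ 2 *
        ∑ s ∈ range h, if t + h ≤ r + s then ρ ^ (r + 2 * s - (t + h)) else 0 :=
    fun t ht r hr => integral_arRegressor_mul_lpError m ρ β0 huL2 humean hucov huyL2 huymean
      huyucov (by have := mem_Icc.1 hr; omega) (hlead t ht)
  have hscore : ∀ t ∈ Icc 1 N,
      ∫ ω, (arRegressor m ρ u t ω - (N : ℝ)⁻¹ * ∑ r ∈ Icc 1 N, arRegressor m ρ u r ω) *
        lpError uy u ρ β0 h t ω ∂μ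
      = -(N : ℝ)⁻¹ * ∑ r ∈ Icc 1 N, ∫ ω, arRegressor m ρ u r ω * lpError uy u ρ β0 h t ω ∂μ := by
    intro t ht
    rw [integral_sub_const_mul_finset_sum_mul_of_memLp_two _ (hx_mem t ht) hx_mem
      (memLp_lpError ρ β0 huL2 huyL2 (hlead t ht)), hcov t ht t ht,
      sum_eq_zero fun s hs => if_neg (by have := mem_range.1 hs; omega)]
    ring
  change _ = -β0 * σ ^ 2 * lpBiasFunction N h ρ
  rw [sum_congr rfl hscore, sum_congr rfl fun t ht => by rw [sum_congr rfl (hcov t ht)],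
    lpBiasFunction_eq]
  simp only [← mul_sum]
  ring

/-- The exact first moment of the score of the fixed-effect estimator in the
prototype panel local projection: `Σ_{t=1}^{T_h} E[x̃_t e^{(h)}_{t+h}] = −β⁰ σ² f_{T,h}(ρ)`,
where `f_{T,h}(ρ) = Σ_{s=0}^{h−1} Σ_{t=h−s}^{T−h} (1 − t/(T−h)) ρ^{t−h+2s}`. -/
theorem demeaned_score_first_moment
    {Ω : Type*} [m0 : MeasurableSpace Ω] (μ : Measure Ω) [IsProbabilityMeasure μ]
    (T h : ℕ) (hh : 1 ≤ h) (hT : 2 * h ≤ T)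
    (ρ β0 σ : ℝ) (hσ : 0 < σ)
    (u : ℕ → Ω → ℝ)
    (huL2 : ∀ a ∈ Finset.range (T + 1), MemLp (u a) 2 μ)
    (humean : ∀ a ∈ Finset.range (T + 1), ∫ ω, u a ω ∂μ = 0)
    (hucov : ∀ a ∈ Finset.range (T + 1), ∀ b ∈ Finset.range (T + 1),
      ∫ ω, u a ω * u b ω ∂μ = if a = b then σ ^ 2 else 0)
    (uy : ℕ → Ω → ℝ)
    (huyL2 : ∀ n ∈ Finset.Icc 1 T, MemLp (uy n) 2 μ)
    (huymean : ∀ n ∈ Finset.Icc 1 T, ∫ ω, uy n ω ∂μ = 0)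
    (huyucov : ∀ n ∈ Finset.Icc 1 T, ∀ a ∈ Finset.range (T + 1),
      ∫ ω, uy n ω * u a ω ∂μ = 0)
    (m : ℕ → ℝ) (x : ℕ → Ω → ℝ)
    (hx : ∀ t, x t = fun ω => m t + ∑ ℓ ∈ Finset.range (t + 1), ρ ^ ℓ * u (t - ℓ) ω)
    (xbar : Ω → ℝ)
    (hxbar : xbar = fun ω => ((T - h : ℕ) : ℝ)⁻¹ * ∑ t ∈ Finset.Icc 1 (T - h), x t ω)
    (xtil : ℕ → Ω → ℝ) (hxtil : ∀ t, xtil t = fun ω => x t ω - xbar ω)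
    (e : ℕ → Ω → ℝ)
    (he : ∀ t, e t = fun ω =>
      uy (t + h) ω + β0 * ∑ s ∈ Finset.range h, ρ ^ s * u (t + h - s) ω) :
    ∑ t ∈ Finset.Icc 1 (T - h), ∫ ω, xtil t ω * e t ω ∂μ
      = -β0 * σ ^ 2
          * ∑ s ∈ Finset.range h, ∑ t ∈ Finset.Icc (h - s) (T - h),
              (1 - (t : ℝ) / ((T - h : ℕ) : ℝ)) * ρ ^ (t + 2 * s - h) :=
  demeaned_score_first_moment_general (m0 := m0) μ T h ρ β0 σ u huL2 humean hucov uy huyL2 huymean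
    huyucov m x hx xbar hxbar xtil hxtil e he
end
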